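/- In an NBC5 configuration whose underlying paths form an optimal Steiner forest and whose path q_1 is a tight alternative of the upper player with respect to a feasible LP(F) cost-share assignment in which all commonly used edges are completely paid, the following hold: (i) every edge substituted by q_1 is completely paid; (ii) the upper player (with terminal pair (u,v)) fully pays all commonly used edges. -/

import Mathlib

/-!
Replacing the edges of `S1 ∪ M` in `F = P_u ∪ P_ℓ` by `q₁` still connects both terminal pairs:
`q₁` runs from `L_ℓ` to `R_ℓ`, which repairs the lower path, and the upper path is repaired
through `q₁` (and possibly `L_ℓ`). Optimality of `F` then gives
`c(S1 ∪ M) ≤ c(q₁) = ∑_{S1} ξ_u ≤ ∑_{S1} (ξ_u + ξ_ℓ) ≤ c(S1) ≤ c(S1 ∪ M)`,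
so all these are equalities: `S1` is completely paid by the upper player alone and the edges
of `M` outside `S1` cost nothing.
-/

namespace NDG

variable {V : Type*} [DecidableEq V]

/-- Total cost of a finite set of edges. -/
def cost (c : Sym2 V → ℝ) (F : Finset (Sym2 V)) : ℝ := ∑ e ∈ F, c e

/-- A Steiner forest: an acyclic set of edges of `G` connecting both
terminal pairs. -/
def IsSteinerForest (G : SimpleGraph V) (s₁ t₁ s₂ t₂ : V) (F : Finset (Sym2 V)) : Prop :=
  (↑F ⊆ G.edgeSet) ∧
  (SimpleGraph.fromEdgeSet (↑F : Set (Sym2 V))).IsAcyclic ∧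
  (∃ p : G.Walk s₁ t₁, p.IsPath ∧ ∀ e ∈ p.edges, e ∈ F) ∧
  (∃ p : G.Walk s₂ t₂, p.IsPath ∧ ∀ e ∈ p.edges, e ∈ F)

/-- An optimal Steiner forest: one of minimum total cost. -/
def IsOptimalSteinerForest (G : SimpleGraph V) (s₁ t₁ s₂ t₂ : V) (c : Sym2 V → ℝ)
    (F : Finset (Sym2 V)) : Prop :=
  IsSteinerForest G s₁ t₁ s₂ t₂ F ∧
  ∀ F', IsSteinerForest G s₁ t₁ s₂ t₂ F' → cost c F ≤ cost c F'

/-- A strategy of a player: a simple path between her terminals. -/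
abbrev Strat (G : SimpleGraph V) (s t : V) := {p : G.Walk s t // p.IsPath}

/-- A cost sharing protocol: cost shares for both players on every edge,
depending on the chosen strategy profile. -/
abbrev Protocol (G : SimpleGraph V) (s₁ t₁ s₂ t₂ : V) :=
  Strat G s₁ t₁ → Strat G s₂ t₂ → Fin 2 → Sym2 V → ℝ

/-- The set of players using edge `e` in the profile `(P₁, P₂)`. -/
def usedBy {G : SimpleGraph V} {s₁ t₁ s₂ t₂ : V}
    (P₁ : Strat G s₁ t₁) (P₂ : Strat G s₂ t₂) (e : Sym2 V) : Finset (Fin 2) :=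
  (if e ∈ P₁.1.edges then {0} else ∅) ∪ (if e ∈ P₂.1.edges then {1} else ∅)

/-- The total cost player 1 pays. -/
def cost₁ {G : SimpleGraph V} {s₁ t₁ s₂ t₂ : V} (Ξ : Protocol G s₁ t₁ s₂ t₂)
    (P₁ : Strat G s₁ t₁) (P₂ : Strat G s₂ t₂) : ℝ :=
  ∑ e ∈ P₁.1.edges.toFinset, Ξ P₁ P₂ 0 e

/-- The total cost player 2 pays. -/
def cost₂ {G : SimpleGraph V} {s₁ t₁ s₂ t₂ : V} (Ξ : Protocol G s₁ t₁ s₂ t₂)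
    (P₁ : Strat G s₁ t₁) (P₂ : Strat G s₂ t₂) : ℝ :=
  ∑ e ∈ P₂.1.edges.toFinset, Ξ P₁ P₂ 1 e

/-- Pure Nash equilibrium of the two-player game induced by the protocol `Ξ`. -/
def IsPNE {G : SimpleGraph V} {s₁ t₁ s₂ t₂ : V} (Ξ : Protocol G s₁ t₁ s₂ t₂)
    (P₁ : Strat G s₁ t₁) (P₂ : Strat G s₂ t₂) : Prop :=
  (∀ Q₁, cost₁ Ξ P₁ P₂ ≤ cost₁ Ξ Q₁ P₂) ∧ (∀ Q₂, cost₂ Ξ P₁ P₂ ≤ cost₂ Ξ P₁ Q₂)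

/-- A separable cost sharing protocol: nonnegative, budget-balanced, stable and
separable (cost shares on an edge depend only on the set of players using it). -/
structure IsSeparable {G : SimpleGraph V} {s₁ t₁ s₂ t₂ : V} (c : Sym2 V → ℝ)
    (Ξ : Protocol G s₁ t₁ s₂ t₂) : Prop where
  nonneg : ∀ P₁ P₂ i e, 0 ≤ Ξ P₁ P₂ i e
  budget : ∀ P₁ P₂ e, (usedBy P₁ P₂ e).Nonempty →
    ∑ i ∈ usedBy P₁ P₂ e, Ξ P₁ P₂ i e = c e
  stable : ∃ P₁ P₂, IsPNE Ξ P₁ P₂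
  separable : ∀ P₁ P₂ Q₁ Q₂ e, usedBy P₁ P₂ e = usedBy Q₁ Q₂ e →
    ∀ i, Ξ P₁ P₂ i e = Ξ Q₁ Q₂ i e

/-- A Steiner forest `F` is enforceable if the profile of the unique paths of
the two players inside `F` is a pure Nash equilibrium of the game induced by
some separable cost sharing protocol. -/
def Enforceable (G : SimpleGraph V) (s₁ t₁ s₂ t₂ : V) (c : Sym2 V → ℝ)
    (F : Finset (Sym2 V)) : Prop :=
  ∃ (P₁ : Strat G s₁ t₁) (P₂ : Strat G s₂ t₂),
    (∀ e ∈ P₁.1.edges, e ∈ F) ∧ (∀ e ∈ P₂.1.edges, e ∈ F) ∧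
    (∀ Q₁ : Strat G s₁ t₁, (∀ e ∈ Q₁.1.edges, e ∈ F) → Q₁ = P₁) ∧
    (∀ Q₂ : Strat G s₂ t₂, (∀ e ∈ Q₂.1.edges, e ∈ F) → Q₂ = P₂) ∧
    ∃ Ξ : Protocol G s₁ t₁ s₂ t₂, IsSeparable c Ξ ∧ IsPNE Ξ P₁ P₂

/-- `(G,(s₁,t₁),(s₂,t₂))` is efficient: for every nonnegative cost function
some optimal Steiner forest is enforceable (the PoS is 1). -/
def Efficient (G : SimpleGraph V) (s₁ t₁ s₂ t₂ : V) : Prop :=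
  ∀ c : Sym2 V → ℝ, (∀ e, 0 ≤ c e) →
    ∃ F, IsOptimalSteinerForest G s₁ t₁ s₂ t₂ c F ∧ Enforceable G s₁ t₁ s₂ t₂ c F

/-- `(G,(s₁,t₁),(s₂,t₂))` is strongly efficient: for every nonnegative cost
function every optimal Steiner forest is enforceable. -/
def StronglyEfficient (G : SimpleGraph V) (s₁ t₁ s₂ t₂ : V) : Prop :=
  ∀ c : Sym2 V → ℝ, (∀ e, 0 ≤ c e) →
    ∀ F, IsOptimalSteinerForest G s₁ t₁ s₂ t₂ c F → Enforceable G s₁ t₁ s₂ t₂ c F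

/-- A preliminary bad configuration (PBC) for the terminal pairs `(u,v)` and
`(w,x)`: the path `P_u = Lu ++ M ++ Ru` of one player and the path
`P_ℓ = Ll ++ M ++ Rl` of the other player meet exactly in the nonempty,
consistently oriented common subpath `M`; `q₁` closes a unique cycle with `P_u`
(intersecting it in the segment `S1`, which contains edges of `R_u` and of `M`),
`q₂` and `q₃` close unique cycles with `P_ℓ` (intersecting it in the segments
`S2` resp. `S3`, containing edges of `L_ℓ` resp. `R_ℓ` and of `M`, and missing
part of `M`); moreover `C := C₂ ∩ C₃ ∩ M` is nonempty and contained in `C₁`, and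
`(M ∩ C₁ ∩ C₂) \ C` and `(M ∩ C₁ ∩ C₃) \ C` each contain an edge. -/
structure PBC (G : SimpleGraph V) (u v w x : V) where
  a : V
  b : V
  Lu : G.Walk u a
  M : G.Walk a b
  Ru : G.Walk b v
  Ll : G.Walk w a
  Rl : G.Walk b x
  hM_ne : M.edges ≠ []
  hPu : ((Lu.append M).append Ru).IsPath
  hPl : ((Ll.append M).append Rl).IsPath
  hforest : (SimpleGraph.fromEdgeSet
      {e | e ∈ ((Lu.append M).append Ru).edges ∨ e ∈ ((Ll.append M).append Rl).edges}).IsAcyclic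
  hmeet : ∀ e, e ∈ ((Lu.append M).append Ru).edges →
      e ∈ ((Ll.append M).append Rl).edges → e ∈ M.edges
  hRu_ne : Ru.edges ≠ []
  hLl_ne : Ll.edges ≠ []
  hRl_ne : Rl.edges ≠ []
  a1 : V
  b1 : V
  q1 : G.Walk a1 b1
  S1 : G.Walk a1 b1
  hq1path : q1.IsPath
  hq1_ne : q1.edges ≠ []
  hS1 : S1.darts <:+: ((Lu.append M).append Ru).darts
  hq1closes : ∀ y ∈ q1.support, y ∈ ((Lu.append M).append Ru).support → y = a1 ∨ y = b1
  hC1Ru : ∃ e ∈ S1.edges, e ∈ Ru.edges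
  hC1M : ∃ e ∈ S1.edges, e ∈ M.edges
  a2 : V
  b2 : V
  q2 : G.Walk a2 b2
  S2 : G.Walk a2 b2
  hq2path : q2.IsPath
  hq2_ne : q2.edges ≠ []
  hS2 : S2.darts <:+: ((Ll.append M).append Rl).darts
  hq2closes : ∀ y ∈ q2.support, y ∈ ((Ll.append M).append Rl).support → y = a2 ∨ y = b2
  hC2Ll : ∃ e ∈ S2.edges, e ∈ Ll.edges
  hC2M : ∃ e ∈ S2.edges, e ∈ M.edges
  hMC2 : ∃ e ∈ M.edges, e ∉ S2.edges
  a3 : V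
  b3 : V
  q3 : G.Walk a3 b3
  S3 : G.Walk a3 b3
  hq3path : q3.IsPath
  hq3_ne : q3.edges ≠ []
  hS3 : S3.darts <:+: ((Ll.append M).append Rl).darts
  hq3closes : ∀ y ∈ q3.support, y ∈ ((Ll.append M).append Rl).support → y = a3 ∨ y = b3
  hC3Rl : ∃ e ∈ S3.edges, e ∈ Rl.edges
  hC3M : ∃ e ∈ S3.edges, e ∈ M.edges
  hMC3 : ∃ e ∈ M.edges, e ∉ S3.edges
  hC_ne : ∃ e ∈ M.edges, e ∈ S2.edges ∧ e ∈ S3.edges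
  hC_sub : ∀ e ∈ M.edges, e ∈ S2.edges → e ∈ S3.edges → e ∈ S1.edges
  hC1C2 : ∃ e ∈ M.edges, e ∈ S1.edges ∧ e ∈ S2.edges ∧ e ∉ S3.edges
  hC1C3 : ∃ e ∈ M.edges, e ∈ S1.edges ∧ e ∈ S3.edges ∧ e ∉ S2.edges

namespace PBC

variable {G : SimpleGraph V} {u v w x : V}

/-- The path of the "upper" player (terminals `u`, `v`). -/
def Pu (B : PBC G u v w x) : G.Walk u v := (B.Lu.append B.M).append B.Ru

/-- The path of the "lower" player (terminals `w`, `x`). -/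
def Pl (B : PBC G u v w x) : G.Walk w x := (B.Ll.append B.M).append B.Rl

/-- `q₁` is small: the cycle `C₁` contains no edge of `L_u`. -/
def Small (B : PBC G u v w x) : Prop := ∀ e ∈ B.S1.edges, e ∉ B.Lu.edges

/-- `q₁` is big: the cycle `C₁` contains an edge of `L_u`. -/
def Big (B : PBC G u v w x) : Prop := ∃ e ∈ B.S1.edges, e ∈ B.Lu.edges

/-- Node-disjointness of two walks. -/
def NodeDisj {y z y' z' : V} (p : G.Walk y z) (q : G.Walk y' z') : Prop :=
  ∀ s ∈ p.support, s ∉ q.support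

/-- `q` is internally node-disjoint from `P_u ∪ P_ℓ`. -/
def InternDisj (B : PBC G u v w x) {y z : V} (q : G.Walk y z) : Prop :=
  ∀ s ∈ q.support, s ≠ y → s ≠ z → s ∉ B.Pu.support ∧ s ∉ B.Pl.support

/-- The two walks intersect exactly in a common (possibly reversed) subpath. -/
def CommonMid {y z y' z' : V} (p : G.Walk y z) (q : G.Walk y' z') : Prop :=
  ∃ (c d : V) (m : G.Walk c d), m.IsPath ∧
    m.darts <:+: p.darts ∧ (m.darts <:+: q.darts ∨ m.reverse.darts <:+: q.darts) ∧
    ∀ s, s ∈ p.support → s ∈ q.support → s ∈ m.support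

/-- `q` contains no node of `L_u` or `R_u`. -/
def AvoidsUpperOuter (B : PBC G u v w x) {y z : V} (q : G.Walk y z) : Prop :=
  ∀ s ∈ q.support, s ∉ B.Lu.support ∧ s ∉ B.Ru.support

/-- In BC3/BC4, `q₁` avoids `R_ℓ` and the start node of `q₂`, and its initial
segment `α₁` (up to the last node contained in `L_ℓ`) runs inside the cycle
`C₂` along `L_ℓ`. -/
def LlTraverse (B : PBC G u v w x) : Prop :=
  (∀ s ∈ B.q1.support, s ∉ B.Rl.support) ∧
  B.a2 ∉ B.q1.support ∧
  ∃ (y : V) (α : G.Walk B.a1 y) (β : G.Walk y B.b1),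
    B.q1 = α.append β ∧ y ∈ B.Ll.support ∧
    (∀ e ∈ α.edges, e ∈ B.S2.edges) ∧
    (∀ s ∈ β.support, s ∈ B.Ll.support → s = y)

/-- Types BC1a (`q₁` small) and BC1b (`q₁` big): `q₁,q₂,q₃` pairwise
node-disjoint and internally node-disjoint from `P_u ∪ P_ℓ`. -/
def BC1 (B : PBC G u v w x) : Prop :=
  NodeDisj B.q1 B.q2 ∧ NodeDisj B.q1 B.q3 ∧ NodeDisj B.q2 B.q3 ∧
  B.InternDisj B.q1 ∧ B.InternDisj B.q2 ∧ B.InternDisj B.q3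

/-- Types BC2a–d: `q₃` node-disjoint with `q₁` and `q₂`; `q₁` and `q₂` overlap
exactly in a common subpath (`α₂ = β₂`); everything internally node-disjoint
from `P_u ∪ P_ℓ` (the subtypes corresponding to `q₁` small/big and the two
orientations of the common subpath are subsumed). -/
def BC2 (B : PBC G u v w x) : Prop :=
  NodeDisj B.q3 B.q1 ∧ NodeDisj B.q3 B.q2 ∧
  ¬ NodeDisj B.q1 B.q2 ∧ CommonMid B.q1 B.q2 ∧
  B.InternDisj B.q1 ∧ B.InternDisj B.q2 ∧ B.InternDisj B.q3

/-- Type BC3. -/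
def BC3 (B : PBC G u v w x) : Prop :=
  B.Small ∧ (∀ e ∈ B.M.edges, e ∈ B.S1.edges) ∧
  NodeDisj B.q1 B.q2 ∧ NodeDisj B.q1 B.q3 ∧ NodeDisj B.q2 B.q3 ∧
  B.AvoidsUpperOuter B.q2 ∧ B.AvoidsUpperOuter B.q3 ∧
  B.LlTraverse

/-- Types BC4a/b. -/
def BC4 (B : PBC G u v w x) : Prop :=
  B.Small ∧ (∀ e ∈ B.M.edges, e ∈ B.S1.edges) ∧
  NodeDisj B.q3 B.q1 ∧ NodeDisj B.q3 B.q2 ∧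
  ¬ NodeDisj B.q1 B.q2 ∧ CommonMid B.q1 B.q2 ∧
  B.AvoidsUpperOuter B.q2 ∧ B.AvoidsUpperOuter B.q3 ∧
  B.LlTraverse

/-- A PBC is a bad configuration if it is of one of the nine types
BC1a, BC1b, BC2a, BC2b, BC2c, BC2d, BC3, BC4a, BC4b. -/
def IsBC (B : PBC G u v w x) : Prop := B.BC1 ∨ B.BC2 ∨ B.BC3 ∨ B.BC4

end PBC

/-- `(G,(s₁,t₁),(s₂,t₂))` contains a subgraph which is a bad configuration,
for some assignment of the terminal pairs to `(u,v)` and `(w,x)`. -/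
def ContainsBC (G : SimpleGraph V) (s₁ t₁ s₂ t₂ : V) : Prop :=
  (∃ B : PBC G s₁ t₁ s₂ t₂, B.IsBC) ∨ (∃ B : PBC G s₁ t₁ t₂ s₂, B.IsBC) ∨
  (∃ B : PBC G t₁ s₁ s₂ t₂, B.IsBC) ∨ (∃ B : PBC G t₁ s₁ t₂ s₂, B.IsBC) ∨
  (∃ B : PBC G s₂ t₂ s₁ t₁, B.IsBC) ∨ (∃ B : PBC G s₂ t₂ t₁ s₁, B.IsBC) ∨
  (∃ B : PBC G t₂ s₂ s₁ t₁, B.IsBC) ∨ (∃ B : PBC G t₂ s₂ t₁ s₁, B.IsBC)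

namespace PBC

variable {G : SimpleGraph V} {u v w x : V}

/-- A node of `L_ℓ` is substituted by `q₂` if it is an internal node of the
intersection `S2` of the cycle `C₂` with `P_ℓ`. -/
def SubstitutedByQ2 (B : PBC G u v w x) (s : V) : Prop :=
  s ∈ B.S2.support ∧ s ≠ B.a2 ∧ s ≠ B.b2

/-- A node of `R_ℓ` is substituted by `q₃` if it is an internal node of the
intersection `S3` of the cycle `C₃` with `P_ℓ`. -/
def SubstitutedByQ3 (B : PBC G u v w x) (s : V) : Prop :=
  s ∈ B.S3.support ∧ s ≠ B.a3 ∧ s ≠ B.b3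

/-- NBC1: `q₁` small and `q₁`, `q₃` not node-disjoint. -/
def NBC1 (B : PBC G u v w x) : Prop :=
  B.Small ∧ ∃ s ∈ B.q1.support, s ∈ B.q3.support

/-- NBC2: `q₂`, `q₃` not node-disjoint. -/
def NBC2 (B : PBC G u v w x) : Prop :=
  ∃ s ∈ B.q2.support, s ∈ B.q3.support

/-- NBC3: `q₂` contains an internal node of `L_u` or of `R_u`. -/
def NBC3 (B : PBC G u v w x) : Prop :=
  ∃ s ∈ B.q2.support,
    (s ∈ B.Lu.support ∧ s ≠ u ∧ s ≠ B.a) ∨ (s ∈ B.Ru.support ∧ s ≠ B.b ∧ s ≠ v)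

/-- NBC4: `q₃` contains an internal node of `L_u` or of `R_u`. -/
def NBC4 (B : PBC G u v w x) : Prop :=
  ∃ s ∈ B.q3.support,
    (s ∈ B.Lu.support ∧ s ≠ u ∧ s ≠ B.a) ∨ (s ∈ B.Ru.support ∧ s ≠ B.b ∧ s ≠ v)

/-- NBC5: `q₁` contains a node of `L_ℓ` and a node of `R_ℓ`. -/
def NBC5 (B : PBC G u v w x) : Prop :=
  (∃ s ∈ B.q1.support, s ∈ B.Ll.support ∧ s ≠ B.a) ∧
  (∃ s ∈ B.q1.support, s ∈ B.Rl.support ∧ s ≠ B.b)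

/-- NBC6: `q₁` small and `q₁` contains a node of `R_ℓ`. -/
def NBC6 (B : PBC G u v w x) : Prop :=
  B.Small ∧ ∃ s ∈ B.q1.support, s ∈ B.Rl.support ∧ s ≠ B.b

/-- NBC7: `q₁` big and `q₁` contains a node of `R_ℓ` not substituted by `q₃`. -/
def NBC7 (B : PBC G u v w x) : Prop :=
  B.Big ∧ ∃ s ∈ B.q1.support, s ∈ B.Rl.support ∧ s ≠ B.b ∧ ¬ B.SubstitutedByQ3 s

/-- NBC8: `q₁` big and either `q₁` is not node-disjoint with `q₂` and contains
a node of `R_ℓ` substituted by `q₃`, or `q₁` is not node-disjoint with `q₃` and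
contains a node of `L_ℓ` substituted by `q₂`. -/
def NBC8 (B : PBC G u v w x) : Prop :=
  B.Big ∧
  ((¬ NodeDisj B.q1 B.q2 ∧
      ∃ s ∈ B.q1.support, s ∈ B.Rl.support ∧ s ≠ B.b ∧ B.SubstitutedByQ3 s) ∨
   (¬ NodeDisj B.q1 B.q3 ∧
      ∃ s ∈ B.q1.support, s ∈ B.Ll.support ∧ s ≠ B.a ∧ B.SubstitutedByQ2 s))

/-- NBC9: `q₁` contains a node of `L_ℓ` not substituted by `q₂`. -/
def NBC9 (B : PBC G u v w x) : Prop :=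
  ∃ s ∈ B.q1.support, s ∈ B.Ll.support ∧ s ≠ B.a ∧ ¬ B.SubstitutedByQ2 s

/-- NBC10: `q₁` small and `q₁` (directed from left to right) contains a node of
`L_ℓ` substituted by `q₂` after a node of `q₂`. -/
def NBC10 (B : PBC G u v w x) : Prop :=
  B.Small ∧ ∃ z y : V, z ∈ B.q2.support ∧
    y ∈ B.Ll.support ∧ y ≠ B.a ∧ B.SubstitutedByQ2 y ∧ [z, y].Sublist B.q1.support

/-- NBC11: `q₁` big and either `q₁` (directed) contains a node of `L_ℓ`
substituted by `q₂` after a node of `q₂`, or `q₁` (directed) contains a node of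
`q₃` after a node of `R_ℓ` substituted by `q₃`. -/
def NBC11 (B : PBC G u v w x) : Prop :=
  B.Big ∧
  ((∃ z y : V, z ∈ B.q2.support ∧
      y ∈ B.Ll.support ∧ y ≠ B.a ∧ B.SubstitutedByQ2 y ∧ [z, y].Sublist B.q1.support) ∨
   (∃ z y : V, z ∈ B.Rl.support ∧ z ≠ B.b ∧ B.SubstitutedByQ3 z ∧
      y ∈ B.q3.support ∧ [z, y].Sublist B.q1.support))

/-- NBC12: `q₁` big, not node-disjoint with `q₂` and not node-disjoint
with `q₃`. -/
def NBC12 (B : PBC G u v w x) : Prop :=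
  B.Big ∧ ¬ NodeDisj B.q1 B.q2 ∧ ¬ NodeDisj B.q1 B.q3

/-- A PBC is a No Bad Configuration if it is of one of the twelve types
NBC1–NBC12. -/
def IsNBC (B : PBC G u v w x) : Prop :=
  B.NBC1 ∨ B.NBC2 ∨ B.NBC3 ∨ B.NBC4 ∨ B.NBC5 ∨ B.NBC6 ∨
  B.NBC7 ∨ B.NBC8 ∨ B.NBC9 ∨ B.NBC10 ∨ B.NBC11 ∨ B.NBC12

end PBC

/-- Total cost of (the edges of) a walk. -/
def walkCost {G : SimpleGraph V} (c : Sym2 V → ℝ) {y z : V} (q : G.Walk y z) : ℝ :=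
  ∑ e ∈ q.edges.toFinset, c e

section LP

variable (G : SimpleGraph V) {s₁ t₁ s₂ t₂ : V} (c : Sym2 V → ℝ)

/-- Feasibility for LP(F), where `F` consists of the edges of `P₁` and `P₂`:
nonnegative cost shares, supported on the respective path, capacity constraints
on every edge of `F`, and the Nash constraints for all alternative paths. -/
def Feasible2 (P₁ : G.Walk s₁ t₁) (P₂ : G.Walk s₂ t₂) (ξ₁ ξ₂ : Sym2 V → ℝ) : Prop :=
  (∀ e, 0 ≤ ξ₁ e) ∧ (∀ e, 0 ≤ ξ₂ e) ∧
  (∀ e, e ∉ P₁.edges → ξ₁ e = 0) ∧ (∀ e, e ∉ P₂.edges → ξ₂ e = 0) ∧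
  (∀ e ∈ P₁.edges.toFinset ∪ P₂.edges.toFinset, ξ₁ e + ξ₂ e ≤ c e) ∧
  (∀ q : G.Walk s₁ t₁, q.IsPath →
    ∑ e ∈ P₁.edges.toFinset \ q.edges.toFinset, ξ₁ e ≤
      ∑ e ∈ q.edges.toFinset \ P₁.edges.toFinset, c e) ∧
  (∀ q : G.Walk s₂ t₂, q.IsPath →
    ∑ e ∈ P₂.edges.toFinset \ q.edges.toFinset, ξ₂ e ≤
      ∑ e ∈ q.edges.toFinset \ P₂.edges.toFinset, c e)

/-- Objective function of LP(F). -/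
def Obj2 (P₁ : G.Walk s₁ t₁) (P₂ : G.Walk s₂ t₂) (ξ₁ ξ₂ : Sym2 V → ℝ) : ℝ :=
  ∑ e ∈ P₁.edges.toFinset, ξ₁ e + ∑ e ∈ P₂.edges.toFinset, ξ₂ e

/-- Optimal solutions of LP(F). -/
def Optimal2 (P₁ : G.Walk s₁ t₁) (P₂ : G.Walk s₂ t₂) (ξ₁ ξ₂ : Sym2 V → ℝ) : Prop :=
  Feasible2 G c P₁ P₂ ξ₁ ξ₂ ∧
  ∀ η₁ η₂, Feasible2 G c P₁ P₂ η₁ η₂ → Obj2 G P₁ P₂ η₁ η₂ ≤ Obj2 G P₁ P₂ ξ₁ ξ₂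

/-- Edge `e` is completely paid. -/
def Paid (ξ₁ ξ₂ : Sym2 V → ℝ) (e : Sym2 V) : Prop := ξ₁ e + ξ₂ e = c e

/-- Increase the cost share on `e` by `ε` and decrease it on `f` by `ε`. -/
def pushFun (ξ : Sym2 V → ℝ) (e f : Sym2 V) (ε : ℝ) : Sym2 V → ℝ :=
  fun g => if g = e then ξ g + ε else if g = f then ξ g - ε else ξ g

/-- The ordering of the edges of `F`: first the `ℓ₁` edges of `P₁` from `s₁` to
the middle part, then the `ℓ₂` edges of `P₂` from `s₂` to the middle part, then
the `m` middle edges from left to right, then the `r₁` edges towards `t₁`, then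
the `r₂` edges towards `t₂`. -/
def ordList {a b : V} (L₁ : G.Walk s₁ a) (M : G.Walk a b) (R₁ : G.Walk b t₁)
    (L₂ : G.Walk s₂ a) (R₂ : G.Walk b t₂) : List (Sym2 V) :=
  L₁.edges ++ L₂.edges ++ M.edges ++ R₁.edges ++ R₂.edges

/-- `k` is the (0-based) position of the first edge of `F` (w.r.t. the
ordering `ord`) which is not completely paid. -/
def FirstUnpaid (ord : List (Sym2 V)) (ξ₁ ξ₂ : Sym2 V → ℝ) (k : ℕ) : Prop :=
  k < ord.length ∧ (∀ e, ord[k]? = some e → ¬ Paid c ξ₁ ξ₂ e) ∧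
  ∀ j, j < k → ∀ e, ord[j]? = some e → Paid c ξ₁ ξ₂ e

/-- The solution `(ξ₁, ξ₂)` is pushed to the left: no push operation (moving
an `ε > 0` of a player's cost share from an edge of higher order to an edge of
lower order) yields a feasible solution of LP(F). -/
def PushedLeft (P₁ : G.Walk s₁ t₁) (P₂ : G.Walk s₂ t₂) (ord : List (Sym2 V))
    (ξ₁ ξ₂ : Sym2 V → ℝ) : Prop :=
  (∀ e ∈ P₁.edges, ∀ f ∈ P₁.edges, ord.idxOf e < ord.idxOf f →
    ∀ ε : ℝ, 0 < ε → ¬ Feasible2 G c P₁ P₂ (pushFun ξ₁ e f ε) ξ₂) ∧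
  (∀ e ∈ P₂.edges, ∀ f ∈ P₂.edges, ord.idxOf e < ord.idxOf f →
    ∀ ε : ℝ, 0 < ε → ¬ Feasible2 G c P₁ P₂ ξ₁ (pushFun ξ₂ e f ε))

/-- Feasibility of the operation CHANGE(j,i) for the middle edges `ej`, `ei`:
increasing `ξ₂` on `ei` and `ξ₁` on `ej` while simultaneously decreasing `ξ₂`
on `ej` and `ξ₁` on `ei` by some common positive amount stays feasible. -/
def ChangeFeasible (P₁ : G.Walk s₁ t₁) (P₂ : G.Walk s₂ t₂) (ξ₁ ξ₂ : Sym2 V → ℝ)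
    (ej ei : Sym2 V) : Prop :=
  ∃ ε : ℝ, 0 < ε ∧ Feasible2 G c P₁ P₂ (pushFun ξ₁ ej ei ε) (pushFun ξ₂ ei ej ε)

/-- Property (2M): the sum of cost shares of Player 2 is maximal among all
optimal solutions of LP(F) whose first not-completely-paid edge is the edge of
order `k`. -/
def Max2 (P₁ : G.Walk s₁ t₁) (P₂ : G.Walk s₂ t₂) (ord : List (Sym2 V))
    (ξ₂ : Sym2 V → ℝ) (k : ℕ) : Prop :=
  ∀ η₁ η₂, Optimal2 G c P₁ P₂ η₁ η₂ → FirstUnpaid c ord η₁ η₂ k →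
    ∑ e ∈ P₂.edges.toFinset, η₂ e ≤ ∑ e ∈ P₂.edges.toFinset, ξ₂ e

/-- Property (NC): CHANGE(j,i) is not feasible for any pair `j < i` of
middle-part positions (the middle part occupies positions `ℓ, …, ℓ+m-1`). -/
def NoChange (P₁ : G.Walk s₁ t₁) (P₂ : G.Walk s₂ t₂) (ord : List (Sym2 V))
    (ξ₁ ξ₂ : Sym2 V → ℝ) (ℓ m : ℕ) : Prop :=
  ∀ j i : ℕ, ℓ ≤ j → j < i → i < ℓ + m →
    ∀ ej ei : Sym2 V, ord[j]? = some ej → ord[i]? = some ei →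
      ¬ ChangeFeasible G c P₁ P₂ ξ₁ ξ₂ ej ei

/-- The solution is maximized for Player 2: properties (2M) and (NC). -/
def Maximized2 (P₁ : G.Walk s₁ t₁) (P₂ : G.Walk s₂ t₂) (ord : List (Sym2 V))
    (ξ₁ ξ₂ : Sym2 V → ℝ) (k ℓ m : ℕ) : Prop :=
  Max2 G c P₁ P₂ ord ξ₂ k ∧ NoChange G c P₁ P₂ ord ξ₁ ξ₂ ℓ m

end LP

end NDG

open SimpleGraph

theorem List.Nodup.idxOf_lt_idxOf_of_mem_append {α : Type*} [DecidableEq α] {l₁ l₂ : List α}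
    {a b : α} (hnd : (l₁ ++ l₂).Nodup) (ha : a ∈ l₁) (hb : b ∈ l₂) :
    (l₁ ++ l₂).idxOf a < (l₁ ++ l₂).idxOf b := by
  have hb₁ : b ∉ l₁ := fun hb₁ => List.disjoint_of_nodup_append hnd hb₁ hb
  rw [List.idxOf_append_of_mem ha, List.idxOf_append_of_notMem hb₁]
  exact (List.idxOf_lt_length_iff.mpr ha).trans_le (Nat.le_add_right _ _)

theorem List.Nodup.notMem_of_append_eq_append {α : Type*}
    {l₁ l₂ l₃ l₄ : List α} {a b : α} (hnd : (l₁ ++ l₂).Nodup) (h : l₁ ++ l₂ = l₃ ++ l₄)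
    (hb₂ : b ∈ l₂) (hb₃ : b ∈ l₃) (ha₁ : a ∈ l₁) : a ∉ l₄ := by
  classical
  exact fun ha₄ => (hnd.idxOf_lt_idxOf_of_mem_append ha₁ hb₂).not_gt
    (h ▸ (h ▸ hnd).idxOf_lt_idxOf_of_mem_append hb₃ ha₄)

theorem Finset.eq_of_sum_le_sum_of_add_le {ι : Type*} [DecidableEq ι] {S D : Finset ι}
    {a b c : ι → ℝ} (hSD : S ⊆ D) (hb : ∀ i ∈ S, 0 ≤ b i) (hab : ∀ i ∈ S, a i + b i ≤ c i)
    (hc : ∀ i ∈ D, 0 ≤ c i) (h : ∑ i ∈ D, c i ≤ ∑ i ∈ S, a i) :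
    (∀ i ∈ S, a i = c i ∧ b i = 0) ∧ ∀ i ∈ D \ S, c i = 0 := by
  have hS : ∀ i ∈ S, 0 ≤ c i - a i := fun i hi => by linarith [hb i hi, hab i hi]
  have hDS : ∀ i ∈ D \ S, 0 ≤ c i := fun i hi => hc i (Finset.sdiff_subset hi)
  have hS' := Finset.sum_nonneg hS
  have hDS' := Finset.sum_nonneg hDS
  have hsplit := Finset.sum_sdiff hSD (f := c)
  rw [Finset.sum_sub_distrib] at hS'
  have hS0 : ∑ i ∈ S, (c i - a i) = 0 := by rw [Finset.sum_sub_distrib]; linarith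
  refine ⟨fun i hi => ?_, (Finset.sum_eq_zero_iff_of_nonneg hDS).mp (by linarith)⟩
  have := (Finset.sum_eq_zero_iff_of_nonneg hS).mp hS0 i hi
  constructor <;> linarith [hb i hi, hab i hi]

theorem SimpleGraph.Walk.reachable_fromEdgeSet {V : Type*} {G : SimpleGraph V}
    {S : Set (Sym2 V)} {a b y z : V} (p : G.Walk a b) (hp : ∀ e ∈ p.edges, e ∈ S)
    (hy : y ∈ p.support) (hz : z ∈ p.support) : (fromEdgeSet S).Reachable y z := by
  have hp' : ∀ e ∈ p.edges, e ∈ (fromEdgeSet S).edgeSet := fun e he => by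
    rw [edgeSet_fromEdgeSet]
    exact ⟨hp e he, G.not_isDiag_of_mem_edgeSet (p.edges_subset_edgeSet he)⟩
  have hs := p.support_transfer hp'
  obtain ⟨py, -, -⟩ := (p.transfer _ hp').mem_support_iff_exists_append.mp (hs ▸ hy)
  obtain ⟨pz, -, -⟩ := (p.transfer _ hp').mem_support_iff_exists_append.mp (hs ▸ hz)
  exact py.reachable.symm.trans pz.reachable

namespace NDG

variable {V : Type*}

theorem exists_isSteinerForest_subset {G : SimpleGraph V} {s₁ t₁ s₂ t₂ : V}
    {F : Finset (Sym2 V)} (hFG : (↑F : Set (Sym2 V)) ⊆ G.edgeSet)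
    (h₁ : (fromEdgeSet (↑F : Set (Sym2 V))).Reachable s₁ t₁)
    (h₂ : (fromEdgeSet (↑F : Set (Sym2 V))).Reachable s₂ t₂) :
    ∃ F' ⊆ F, IsSteinerForest G s₁ t₁ s₂ t₂ F' := by
  classical
  obtain ⟨H, hHF, hH, hreach⟩ :=
    (fromEdgeSet (↑F : Set (Sym2 V))).exists_isAcyclic_reachable_eq_le
  have hHF' : H.edgeSet ⊆ ↑F := fun e he => by
    have := edgeSet_mono hHF he
    rw [edgeSet_fromEdgeSet] at this
    exact this.1
  set F' := F.filter (· ∈ H.edgeSet)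
  have hF' : (↑F' : Set (Sym2 V)) = H.edgeSet := by
    ext e
    simpa [F'] using fun he => hHF' he
  have hHG : H ≤ G := fun y z hyz => hFG (hHF' ((H.mem_edgeSet).mpr hyz))
  have path : ∀ {y z}, H.Reachable y z → ∃ p : G.Walk y z, p.IsPath ∧ ∀ e ∈ p.edges, e ∈ F' := by
    rintro y z ⟨p⟩
    refine ⟨p.toPath.1.mapLe hHG, p.toPath.2.mapLe hHG, fun e he => ?_⟩
    rw [Walk.edges_mapLe_eq_edges] at he
    exact_mod_cast hF' ▸ p.toPath.1.edges_subset_edgeSet he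
  refine ⟨F', Finset.filter_subset _ _, hF' ▸ edgeSet_mono hHG, ?_,
    path (hreach ▸ h₁), path (hreach ▸ h₂)⟩
  rwa [hF', fromEdgeSet_edgeSet]

theorem IsOptimalSteinerForest.cost_le_of_exchange [DecidableEq V] {G : SimpleGraph V}
    {s₁ t₁ s₂ t₂ : V} {c : Sym2 V → ℝ} {F D Q : Finset (Sym2 V)}
    (hF : IsOptimalSteinerForest G s₁ t₁ s₂ t₂ c F)
    (hc : ∀ e, 0 ≤ c e) (hDF : D ⊆ F) (hQG : (↑Q : Set (Sym2 V)) ⊆ G.edgeSet)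
    (h₁ : (fromEdgeSet (↑(F \ D ∪ Q) : Set (Sym2 V))).Reachable s₁ t₁)
    (h₂ : (fromEdgeSet (↑(F \ D ∪ Q) : Set (Sym2 V))).Reachable s₂ t₂) :
    cost c D ≤ cost c Q := by
  have hFG : (↑(F \ D ∪ Q) : Set (Sym2 V)) ⊆ G.edgeSet := by
    rw [Finset.coe_union]
    exact Set.union_subset ((Finset.coe_subset.mpr Finset.sdiff_subset).trans hF.1.1) hQG
  obtain ⟨F', hF'sub, hF'⟩ := exists_isSteinerForest_subset hFG h₁ h₂
  have hinter : 0 ≤ cost c (F \ D ∩ Q) := Finset.sum_nonneg fun e _ => hc e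
  have hunion : cost c (F \ D ∪ Q) + cost c (F \ D ∩ Q) = cost c (F \ D) + cost c Q :=
    Finset.sum_union_inter
  have hsplit : cost c (F \ D) + cost c D = cost c F := Finset.sum_sdiff hDF
  have hopt : cost c F ≤ cost c (F \ D ∪ Q) :=
    (hF.2 F' hF').trans (Finset.sum_le_sum_of_subset_of_nonneg hF'sub fun e _ _ => hc e)
  linarith

namespace PBC

variable {G : SimpleGraph V} {u v w x : V} (B : PBC G u v w x)

theorem edges_Pu : B.Pu.edges = B.Lu.edges ++ B.M.edges ++ B.Ru.edges := by
  simp [Pu, Walk.edges_append]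

theorem edges_Pl : B.Pl.edges = B.Ll.edges ++ B.M.edges ++ B.Rl.edges := by
  simp [Pl, Walk.edges_append]

theorem exists_Pu_eq_append :
    ∃ (T₁ : G.Walk u B.a1) (T₂ : G.Walk B.b1 v), B.Pu = (T₁.append B.S1).append T₂ := by
  obtain ⟨e, he, -⟩ := B.hC1Ru
  have hnil : ¬ B.S1.Nil := fun h => by simp [Walk.edges_eq_nil.mpr h] at he
  exact (Walk.isSubwalk_iff_darts_isInfix hnil).mpr B.hS1

theorem S1_edges_subset : ∀ e ∈ B.S1.edges, e ∈ B.Pu.edges := by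
  obtain ⟨T₁, T₂, hPu⟩ := B.exists_Pu_eq_append
  intro e he
  simp [hPu, Walk.edges_append, he]

variable {B}

def exchangeEdges (B : PBC G u v w x) : Set (Sym2 V) :=
  {e | (e ∈ B.Pu.edges ∨ e ∈ B.Pl.edges) ∧ e ∉ B.S1.edges ∧ e ∉ B.M.edges} ∪ {e | e ∈ B.q1.edges}

theorem lower_edges_subset_exchangeEdges :
    (∀ e ∈ B.Ll.edges, e ∈ B.exchangeEdges) ∧ ∀ e ∈ B.Rl.edges, e ∈ B.exchangeEdges := by
  have hnd : (B.Ll.edges ++ B.M.edges ++ B.Rl.edges).Nodup := B.edges_Pl ▸ B.hPl.edges_nodup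
  have keep : ∀ e ∈ B.Pl.edges, e ∉ B.M.edges → e ∈ B.exchangeEdges := fun e he hM =>
    Or.inl ⟨.inr he, fun hS => hM (B.hmeet e (B.S1_edges_subset e hS) he), hM⟩
  exact ⟨fun e he => keep e (by simp [edges_Pl, he])
      (List.disjoint_of_nodup_append hnd.of_append_left he),
    fun e he => keep e (by simp [edges_Pl, he])
      fun hM => List.disjoint_of_nodup_append hnd (by simp [hM]) he⟩

theorem reachable_lower (h : B.NBC5) : (fromEdgeSet B.exchangeEdges).Reachable w x := by
  obtain ⟨⟨s₁, hs₁q, hs₁L, -⟩, ⟨s₂, hs₂q, hs₂R, -⟩⟩ := h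
  obtain ⟨hLl, hRl⟩ := B.lower_edges_subset_exchangeEdges
  exact ((B.Ll.reachable_fromEdgeSet hLl B.Ll.start_mem_support hs₁L).trans
    (B.q1.reachable_fromEdgeSet (fun _ => Or.inr) hs₁q hs₂q)).trans
    (B.Rl.reachable_fromEdgeSet hRl hs₂R B.Rl.end_mem_support)

section Upper

variable {T₁ : G.Walk u B.a1} {T₂ : G.Walk B.b1 v} (hPu : B.Pu = (T₁.append B.S1).append T₂)
include hPu

theorem edges_Pu_eq_append : B.Pu.edges = T₁.edges ++ B.S1.edges ++ T₂.edges := by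
  rw [hPu, Walk.edges_append, Walk.edges_append]

/-- `T₂` lies behind an edge of `S1 ∩ R_u`, hence inside `R_u`. -/
theorem tail_edges_subset_exchangeEdges : ∀ e ∈ T₂.edges, e ∈ B.exchangeEdges := by
  intro e he
  have hE := edges_Pu_eq_append hPu
  have hnd := hE ▸ B.hPu.edges_nodup
  obtain ⟨f, hfS, hfR⟩ := B.hC1Ru
  refine Or.inl ⟨.inl (by simp [hE, he]), fun hS => ?_, fun hM => ?_⟩
  · exact List.disjoint_of_nodup_append (List.append_assoc _ _ _ ▸ hnd).of_append_right hS he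
  · exact (B.edges_Pu ▸ B.hPu.edges_nodup).notMem_of_append_eq_append (B.edges_Pu ▸ hE) hfR
      (by simp [hfS]) (by simp [hM]) he

theorem head_edges_subset_exchangeEdges (hT₁M : ∀ e ∈ T₁.edges, e ∉ B.M.edges) :
    ∀ e ∈ T₁.edges, e ∈ B.exchangeEdges := by
  intro e he
  have hE := edges_Pu_eq_append hPu
  exact Or.inl ⟨.inl (by simp [hE, he]),
    fun hS => List.disjoint_of_nodup_append (hE ▸ B.hPu.edges_nodup).of_append_left he hS,
    hT₁M e he⟩

/-- If `T₁` contains an edge of `M`, then `S1` lies behind it and misses `L_u`. -/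
theorem Lu_edges_subset_exchangeEdges {e₀ : Sym2 V} (he₀T : e₀ ∈ T₁.edges)
    (he₀M : e₀ ∈ B.M.edges) : ∀ e ∈ B.Lu.edges, e ∈ B.exchangeEdges := by
  intro e he
  have hPuR : B.Pu.edges = B.Lu.edges ++ (B.M.edges ++ B.Ru.edges) := by simp [edges_Pu]
  have hnd := hPuR ▸ B.hPu.edges_nodup
  refine Or.inl ⟨.inl (by simp [edges_Pu, he]), fun hS => ?_, fun hM => ?_⟩
  · exact hnd.notMem_of_append_eq_append
      (hPuR.symm.trans ((edges_Pu_eq_append hPu).trans (List.append_assoc _ _ _)))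
      (by simp [he₀M]) he₀T he (by simp [hS])
  · exact List.disjoint_of_nodup_append hnd he (List.mem_append_left _ hM)

end Upper

theorem reachable_upper (h : B.NBC5) : (fromEdgeSet B.exchangeEdges).Reachable u v := by
  obtain ⟨T₁, T₂, hPu⟩ := B.exists_Pu_eq_append
  have hv : ∀ y ∈ B.q1.support, (fromEdgeSet B.exchangeEdges).Reachable y v := fun y hy =>
    (B.q1.reachable_fromEdgeSet (fun _ => Or.inr) hy B.q1.end_mem_support).trans
      (T₂.reachable_fromEdgeSet (tail_edges_subset_exchangeEdges hPu)
        T₂.start_mem_support T₂.end_mem_support)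
  by_cases hT₁M : ∀ e ∈ T₁.edges, e ∉ B.M.edges
  · exact (T₁.reachable_fromEdgeSet (head_edges_subset_exchangeEdges hPu hT₁M)
      T₁.start_mem_support T₁.end_mem_support).trans (hv _ B.q1.start_mem_support)
  · -- the detour `L_u`, `L_ℓ`, `q₁` replaces `T₁`
    push Not at hT₁M
    obtain ⟨e₀, he₀T, he₀M⟩ := hT₁M
    obtain ⟨⟨s₁, hs₁q, hs₁L, -⟩, -⟩ := h
    exact ((B.Lu.reachable_fromEdgeSet (Lu_edges_subset_exchangeEdges hPu he₀T he₀M)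
      B.Lu.start_mem_support B.Lu.end_mem_support).trans
      (B.Ll.reachable_fromEdgeSet B.lower_edges_subset_exchangeEdges.1
        B.Ll.end_mem_support hs₁L)).trans (hv s₁ hs₁q)

end PBC

variable [DecidableEq V]

theorem nbc5_properties_general
    (G : SimpleGraph V) (u v w x : V) (c : Sym2 V → ℝ)
    (hc : ∀ e, 0 ≤ c e)
    (B : PBC G u v w x)
    (hOpt : IsOptimalSteinerForest G u v w x c
      (B.Pu.edges.toFinset ∪ B.Pl.edges.toFinset))
    (ξu ξl : Sym2 V → ℝ)
    (hFeas : Feasible2 G c B.Pu B.Pl ξu ξl)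
    (ht1 : walkCost c B.q1 = ∑ e ∈ B.S1.edges.toFinset, ξu e)
    (hNBC5 : B.NBC5) :
    (∀ e ∈ B.S1.edges, ξu e + ξl e = c e) ∧
    (∀ e ∈ B.M.edges, ξu e = c e) := by
  obtain ⟨hξu, hξl, -, -, hcap, -, -⟩ := hFeas
  set F := B.Pu.edges.toFinset ∪ B.Pl.edges.toFinset
  set D := B.S1.edges.toFinset ∪ B.M.edges.toFinset
  have hDF : D ⊆ F := Finset.union_subset
    (fun e he => Finset.mem_union_left _ (by simpa using B.S1_edges_subset e (by simpa using he)))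
    (fun e he => Finset.mem_union_left _ (by simp_all [PBC.edges_Pu]))
  have hexch : (↑(F \ D ∪ B.q1.edges.toFinset) : Set (Sym2 V)) = B.exchangeEdges := by
    ext e
    simp [F, D, PBC.exchangeEdges]
  have hDq : cost c D ≤ walkCost c B.q1 :=
    hOpt.cost_le_of_exchange hc hDF (fun e he => B.q1.edges_subset_edgeSet (by simpa using he))
      (hexch ▸ B.reachable_upper hNBC5) (hexch ▸ B.reachable_lower hNBC5)
  obtain ⟨hS1, hMS1⟩ := Finset.eq_of_sum_le_sum_of_add_le (a := ξu) (b := ξl)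
    Finset.subset_union_left (fun e _ => hξl e)
    (fun e he => hcap e (hDF (Finset.mem_union_left _ he))) (fun e _ => hc e) (ht1 ▸ hDq)
  refine ⟨fun e he => ?_, fun e he => ?_⟩
  · obtain ⟨h1, h2⟩ := hS1 e (List.mem_toFinset.mpr he)
    linarith
  · by_cases heS : e ∈ B.S1.edges
    · exact (hS1 e (List.mem_toFinset.mpr heS)).1
    · have hce := hMS1 e (by simp [he, heS])
      have := hcap e (hDF (by simp [D, he]))
      linarith [hξu e, hξl e]

/-- properties of NBC5.  In an NBC5 configuration whose
underlying paths form an optimal Steiner forest and whose path `q₁` is a tight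
alternative of the upper player with respect to a feasible LP(F) cost-share
assignment in which all commonly used edges are completely paid:
(i) every edge substituted by `q₁` is completely paid;
(ii) the upper player (terminal pair `(u,v)`) fully pays all commonly used
edges. -/
theorem nbc5_properties
    [Fintype V] (G : SimpleGraph V) (u v w x : V) (c : Sym2 V → ℝ)
    (hc : ∀ e, 0 ≤ c e)
    (B : PBC G u v w x)
    (hOpt : IsOptimalSteinerForest G u v w x c
      (B.Pu.edges.toFinset ∪ B.Pl.edges.toFinset))
    (ξu ξl : Sym2 V → ℝ)
    (hFeas : Feasible2 G c B.Pu B.Pl ξu ξl)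
    (hPaidM : ∀ e ∈ B.M.edges, ξu e + ξl e = c e)
    (ht1 : walkCost c B.q1 = ∑ e ∈ B.S1.edges.toFinset, ξu e)
    (hNBC5 : B.NBC5) :
    (∀ e ∈ B.S1.edges, ξu e + ξl e = c e) ∧
    (∀ e ∈ B.M.edges, ξu e = c e) :=
  nbc5_properties_general G u v w x c hc B hOpt ξu ξl hFeas ht1 hNBC5

end NDG
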